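/- Let W be a VLA-SS over ℂ and let W₁ ⊆ W be the linear span of the skew defect vectors vₙw + Σ_{k≥0} ((−1)^{n+k}/k!)·D^k(w_{n+k}v) over all v,w ∈ W and n ∈ ℕ. Then W₁ is a two-sided ideal invariant under D: D(W₁) ⊆ W₁, uₙa ∈ W₁ and aₙu ∈ W₁ for all u ∈ W, a ∈ W₁, n ∈ ℕ. Moreover the quotient W_ss = W/W₁, with the induced operator D and products, is a vertex Lie algebra, and every homomorphism from W to a vertex Lie algebra V vanishes on W₁, hence factors through W_ss. -/

import Mathlib

open scoped BigOperators

noncomputable section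

/-- A VLA-J-SS over `ℂ`. -/
structure VLAJSS (U : Type*) [AddCommGroup U] [Module ℂ U] where
  D : U →ₗ[ℂ] U
  mul : ℕ → U →ₗ[ℂ] U →ₗ[ℂ] U
  trunc : ∀ u v : U, ∃ N : ℕ, ∀ n : ℕ, N ≤ n → mul n u v = 0
  dLeft : ∀ (n : ℕ) (u v : U), mul (n + 1) (D u) v = (-((n : ℂ) + 1)) • mul n u v
  dLeftZero : ∀ u v : U, mul 0 (D u) v = 0
  leibniz : ∀ (n : ℕ) (u v : U), D (mul n u v) = mul n (D u) v + mul n u (D v)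

/-- A vertex Lie algebra over `ℂ`: a VLA-J-SS satisfying in addition the half skew
symmetry and the half Jacobi identity. -/
structure VertexLie (U : Type*) [AddCommGroup U] [Module ℂ U] extends VLAJSS U where
  skew : ∀ (n : ℕ) (u v : U),
    mul n u v =
      -∑ᶠ k : ℕ, (((-1 : ℂ) ^ (n + k)) / (Nat.factorial k : ℂ)) • ((D ^ k) (mul (n + k) v u))
  jacobi : ∀ (k m n : ℕ) (u v w : U),
    ∑ᶠ i : ℕ, ((-1 : ℂ) ^ i * (Nat.choose k i : ℂ)) •
        (mul (m + k - i) u (mul (n + i) v w)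
          - ((-1 : ℂ) ^ k) • mul (n + k - i) v (mul (m + i) u w))
      = ∑ᶠ i : ℕ, ((Nat.choose m i : ℂ)) • mul (m + n - i) (mul (k + i) u v) w

variable {U : Type*} [AddCommGroup U] [Module ℂ U]

/-- A VLA-SS over `ℂ`: a VLA-J-SS satisfying the half Jacobi identity. -/
structure VLASS (W : Type*) [AddCommGroup W] [Module ℂ W] extends VLAJSS W where
  jacobi : ∀ (k m n : ℕ) (u v w : W),
    ∑ᶠ i : ℕ, ((-1 : ℂ) ^ i * (Nat.choose k i : ℂ)) •
        (mul (m + k - i) u (mul (n + i) v w)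
          - ((-1 : ℂ) ^ k) • mul (n + k - i) v (mul (m + i) u w))
      = ∑ᶠ i : ℕ, ((Nat.choose m i : ℂ)) • mul (m + n - i) (mul (k + i) u v) w

/-- The set of skew defect vectors. -/
def SkewDefects (A : VLAJSS U) : Set U :=
  {x : U | ∃ (v w : U) (n : ℕ),
    x = A.mul n v w
      + ∑ᶠ k : ℕ, (((-1 : ℂ) ^ (n + k)) / (Nat.factorial k : ℂ)) •
          ((A.D ^ k) (A.mul (n + k) w v))}

/-!
Write `X(n,v,w) = v_n w + ∑ₖ (-1)^(n+k)/k! · Dᵏ(w_{n+k} v)` for the skew defect. The Leibniz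
rule gives `D X(n,v,w) = X(n,Dv,w) + X(n,v,Dw)`. Two special cases of the half Jacobi identity,
the commutator formula (`k = 0`) and the associativity formula (`m = 0`), combine with the
expansion of `u_m Dᵏ` into
`u_m X(n,v,w) = X(n, v, u_m w) + ∑ᵢ C(m,i) X(m+n-i, u_i v, w)`,
so the span `W₁` of the defects is a `D`-stable left ideal. It is a right ideal as well, because
`a_n u = X(n,a,u) - ∑ₖ (-1)^(n+k)/k! · Dᵏ(u_{n+k} a)`. All defects vanish in `W/W₁`, which is
exactly half skew symmetry there; the remaining axioms descend along `W → W/W₁`. A homomorphism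
maps defects to defects, and in a vertex Lie algebra every defect is zero.
-/

open Finset Filter

section Sums

variable {M : Type*} [AddCommMonoid M]

lemma finsum_eq_sum_range_of_eq_zero {f : ℕ → M} {N : ℕ} (hf : ∀ n ≥ N, f n = 0) :
    ∑ᶠ n, f n = ∑ n ∈ range N, f n :=
  finsum_eq_sum_of_support_subset f fun n hn => by
    by_contra hnN
    exact hn (hf n (by simpa using hnN))

lemma LinearMap.map_finsum_of_eq_zero {R N : Type*} [Semiring R] [AddCommMonoid N] [Module R M]
    [Module R N] (φ : M →ₗ[R] N) {f : ℕ → M} {K : ℕ} (hf : ∀ n ≥ K, f n = 0) :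
    φ (∑ᶠ n, f n) = ∑ᶠ n, φ (f n) := by
  rw [finsum_eq_sum_range_of_eq_zero hf,
    finsum_eq_sum_range_of_eq_zero fun n hn => by rw [hf n hn, map_zero], map_sum]

lemma sum_range_sum_antidiagonal_eq {G : ℕ → ℕ → M} {N J : ℕ}
    (hN : ∀ i j, N ≤ i + j → G i j = 0) (hJ : ∀ i j, J ≤ j → G i j = 0) :
    ∑ k ∈ range N, ∑ p ∈ antidiagonal k, G p.1 p.2 = ∑ j ∈ range J, ∑ i ∈ range N, G i j := by
  have inner : ∀ i, ∑ k ∈ Ico i N, G i (k - i) = ∑ j ∈ range J, G i j := by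
    intro i
    rw [sum_Ico_eq_sum_range]
    simp only [Nat.add_sub_cancel_left]
    rw [sum_subset (range_subset_range.2 (Nat.le_add_right J N))
      fun j _ hj => hJ i j (by simpa using hj)]
    refine (sum_subset (range_subset_range.2 (by omega : N - i ≤ J + N)) fun j _ hj => ?_)
    exact hN i j (by simp at hj; omega)
  simp_rw [Nat.sum_antidiagonal_eq_sum_range_succ (fun i j => G i j)]
  rw [sum_comm' (t' := range N) (s' := fun i => Ico i N) (fun k i => by
    simp only [mem_range, mem_Ico]; omega), sum_comm (s := range J)]
  exact sum_congr rfl fun i _ => inner i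

lemma Module.End.pow_succ_apply {R : Type*} [Semiring R] [Module R M] (f : Module.End R M)
    (k : ℕ) (u : M) : (f ^ (k + 1)) u = (f ^ k) (f u) := by
  rw [pow_succ, Module.End.mul_apply]

end Sums

def skewCoeff (n k : ℕ) : ℂ := (-1) ^ (n + k) / (Nat.factorial k : ℂ)

lemma skewCoeff_add_mul_choose_mul_descFactorial (n l j m : ℕ) :
    skewCoeff n (l + j) * (((l + j).choose l : ℂ) * (m.descFactorial j : ℂ))
      = skewCoeff n l * ((-1) ^ j * (m.choose j : ℂ)) := by
  have hchoose : ((l + j).choose l : ℂ) * (Nat.factorial j : ℂ) * (Nat.factorial l : ℂ)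
      = (Nat.factorial (l + j) : ℂ) := by
    rw [add_comm l j]; exact_mod_cast Nat.add_choose_mul_factorial_mul_factorial j l
  have hdesc : (m.descFactorial j : ℂ) = (Nat.factorial j : ℂ) * (m.choose j : ℂ) := by
    exact_mod_cast Nat.descFactorial_eq_factorial_mul_choose m j
  have hl : (Nat.factorial l : ℂ) ≠ 0 := by exact_mod_cast Nat.factorial_ne_zero l
  have hlj : (Nat.factorial (l + j) : ℂ) ≠ 0 := by exact_mod_cast Nat.factorial_ne_zero (l + j)
  rw [skewCoeff, skewCoeff, hdesc, ← add_assoc, pow_add _ (n + l)]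
  field_simp
  linear_combination (m.choose j : ℂ) * hchoose

lemma skewCoeff_mul_neg_one_pow {i m : ℕ} (hi : i ≤ m) (n l : ℕ) :
    skewCoeff n l * ((-1) ^ m * (-1) ^ i) = skewCoeff (m + n - i) l := by
  have hpow : (-1 : ℂ) ^ (n + l) * ((-1) ^ m * (-1) ^ i) = (-1) ^ (m + n - i + l) := by
    rw [← pow_add, ← pow_add, neg_one_pow_eq_pow_mod_two,
      neg_one_pow_eq_pow_mod_two (m + n - i + l)]
    congr 1
    omega
  rw [skewCoeff, skewCoeff, div_mul_eq_mul_div, hpow]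

namespace VLAJSS

variable (A : VLAJSS U)

def skewTail (n : ℕ) (v w : U) : U :=
  ∑ᶠ k : ℕ, skewCoeff n k • (A.D ^ k) (A.mul (n + k) w v)

def skewDefect (n : ℕ) (v w : U) : U := A.mul n v w + A.skewTail n v w

abbrev skewSpan : Submodule ℂ U := Submodule.span ℂ (SkewDefects A)

lemma skewDefect_mem_skewSpan (n : ℕ) (v w : U) : A.skewDefect n v w ∈ A.skewSpan :=
  Submodule.subset_span ⟨v, w, n, rfl⟩

lemma skewSpan_le_comap {f : U →ₗ[ℂ] U}
    (hf : ∀ n v w, f (A.skewDefect n v w) ∈ A.skewSpan) : A.skewSpan ≤ A.skewSpan.comap f :=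
  Submodule.span_le.2 fun _ ⟨v, w, n, hx⟩ => hx ▸ hf n v w

lemma eventually_mul_eq_zero (u v : U) : ∀ᶠ n in atTop, A.mul n u v = 0 :=
  eventually_atTop.2 (A.trunc u v)

lemma skewTail_eq_sum_range (n : ℕ) (v w : U) {N : ℕ} (hN : ∀ j ≥ N, A.mul j w v = 0) :
    A.skewTail n v w = ∑ k ∈ range N, skewCoeff n k • (A.D ^ k) (A.mul (n + k) w v) :=
  finsum_eq_sum_range_of_eq_zero fun k hk => by rw [hN (n + k) (by omega), map_zero, smul_zero]

lemma mul_D_left (m : ℕ) (u v : U) :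
    A.mul m (A.D u) v = (-(m : ℂ)) • A.mul (m - 1) u v := by
  cases m with
  | zero => simp [A.dLeftZero]
  | succ m => rw [A.dLeft]; push_cast; simp

lemma mul_D_right (m : ℕ) (u v : U) :
    A.mul m u (A.D v) = A.D (A.mul m u v) + (m : ℂ) • A.mul (m - 1) u v := by
  rw [A.leibniz, A.mul_D_left, neg_smul]
  abel

lemma mul_D_pow_right (k m : ℕ) (u v : U) :
    A.mul m u ((A.D ^ k) v) = ∑ p ∈ antidiagonal k,
      k.choose p.1 • ((m.descFactorial p.2 : ℂ) • (A.D ^ p.1) (A.mul (m - p.2) u v)) := by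
  induction k generalizing v with
  | zero => simp
  | succ k ih =>
    rw [sum_antidiagonal_choose_succ_nsmul
      (fun i j => (m.descFactorial j : ℂ) • (A.D ^ i) (A.mul (m - j) u v)),
      Module.End.pow_succ_apply A.D, ih, add_comm]
    simp only [mul_D_right, map_add, map_smul, smul_add, sum_add_distrib, smul_smul,
      ← Module.End.pow_succ_apply A.D]
    congr 1
    · refine sum_congr rfl fun p hp => ?_
      rw [k.choose_symm_of_eq_add (mem_antidiagonal.1 hp).symm]
    · refine sum_congr rfl fun p _ => ?_
      rw [Nat.descFactorial_succ, Nat.sub_sub]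
      push_cast
      ring_nf

lemma D_skewTail (n : ℕ) (v w : U) :
    A.D (A.skewTail n v w) = A.skewTail n (A.D v) w + A.skewTail n v (A.D w) := by
  obtain ⟨N, hN⟩ := ((A.eventually_mul_eq_zero w v).and ((A.eventually_mul_eq_zero w (A.D v)).and
    (A.eventually_mul_eq_zero (A.D w) v))).exists_forall_of_atTop
  rw [A.skewTail_eq_sum_range n v w fun j hj => (hN j hj).1,
    A.skewTail_eq_sum_range n (A.D v) w fun j hj => (hN j hj).2.1,
    A.skewTail_eq_sum_range n v (A.D w) fun j hj => (hN j hj).2.2, map_sum, ← sum_add_distrib]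
  refine sum_congr rfl fun k _ => ?_
  rw [map_smul, ← smul_add, ← map_add, ← Module.End.mul_apply, ← pow_succ',
    Module.End.pow_succ_apply, A.leibniz, add_comm]

lemma D_skewDefect (n : ℕ) (v w : U) :
    A.D (A.skewDefect n v w) = A.skewDefect n (A.D v) w + A.skewDefect n v (A.D w) := by
  simp only [skewDefect, map_add, A.leibniz, A.D_skewTail]
  abel

lemma D_mem_skewSpan {a : U} (ha : a ∈ A.skewSpan) : A.D a ∈ A.skewSpan :=
  A.skewSpan_le_comap (fun n v w => by
    rw [A.D_skewDefect]
    exact add_mem (A.skewDefect_mem_skewSpan _ _ _) (A.skewDefect_mem_skewSpan _ _ _)) ha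

lemma D_pow_mem_skewSpan (k : ℕ) {a : U} (ha : a ∈ A.skewSpan) : (A.D ^ k) a ∈ A.skewSpan := by
  induction k with
  | zero => exact ha
  | succ k ih => rw [pow_succ', Module.End.mul_apply]; exact A.D_mem_skewSpan ih

lemma mul_skewTail_eq_sum (m n : ℕ) (u v w : U) {N : ℕ} (hN : ∀ j ≥ N, A.mul j w v = 0) :
    A.mul m u (A.skewTail n v w) = ∑ l ∈ range N, skewCoeff n l • (A.D ^ l)
      (∑ j ∈ range (m + 1),
        ((-1) ^ j * (m.choose j : ℂ)) • A.mul (m - j) u (A.mul (n + l + j) w v)) := by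
  let G : ℕ → ℕ → U := fun l j =>
    (skewCoeff n (l + j) * (((l + j).choose l : ℂ) * (m.descFactorial j : ℂ))) •
      (A.D ^ l) (A.mul (m - j) u (A.mul (n + (l + j)) w v))
  calc A.mul m u (A.skewTail n v w)
      = ∑ k ∈ range N, ∑ p ∈ antidiagonal k, G p.1 p.2 := by
        rw [A.skewTail_eq_sum_range n v w hN, map_sum]
        refine sum_congr rfl fun k _ => ?_
        rw [map_smul, A.mul_D_pow_right, smul_sum]
        refine sum_congr rfl fun ⟨l, j⟩ hlj => ?_
        obtain rfl : l + j = k := mem_antidiagonal.1 hlj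
        rw [← Nat.cast_smul_eq_nsmul ℂ, smul_smul, smul_smul, mul_assoc]
    _ = ∑ j ∈ range (m + 1), ∑ l ∈ range N, G l j :=
        sum_range_sum_antidiagonal_eq (fun l j h => by simp [G, hN (n + (l + j)) (by omega)])
          (fun l j h => by simp [G, Nat.descFactorial_eq_zero_iff_lt.2 (by omega : m < j)])
    _ = _ := by
        rw [sum_comm]
        refine sum_congr rfl fun l _ => ?_
        simp only [G, map_sum, map_smul, smul_sum, smul_smul,
          skewCoeff_add_mul_choose_mul_descFactorial, ← add_assoc]

end VLAJSS

lemma VertexLie.skewDefect_eq_zero {V : Type*} [AddCommGroup V] [Module ℂ V] (B : VertexLie V)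
    (n : ℕ) (v w : V) : B.skewDefect n v w = 0 := by
  rw [VLAJSS.skewDefect, B.skew n v w]
  exact neg_add_cancel _

namespace VLAJSS

variable {V : Type*} [AddCommGroup V] [Module ℂ V]

structure IsHom (A : VLAJSS U) (B : VLAJSS V) (φ : U →ₗ[ℂ] V) : Prop where
  map_mul : ∀ (n : ℕ) (u v : U), φ (A.mul n u v) = B.mul n (φ u) (φ v)
  map_D : ∀ u : U, φ (A.D u) = B.D (φ u)

def JacobiIdentity (A : VLAJSS U) : Prop :=
  ∀ (k m n : ℕ) (u v w : U),
    ∑ᶠ i : ℕ, ((-1 : ℂ) ^ i * (Nat.choose k i : ℂ)) •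
        (A.mul (m + k - i) u (A.mul (n + i) v w)
          - ((-1 : ℂ) ^ k) • A.mul (n + k - i) v (A.mul (m + i) u w))
      = ∑ᶠ i : ℕ, ((Nat.choose m i : ℂ)) • A.mul (m + n - i) (A.mul (k + i) u v) w

namespace IsHom

variable {A : VLAJSS U} {B : VLAJSS V} {φ : U →ₗ[ℂ] V}

lemma map_D_pow (hφ : IsHom A B φ) (k : ℕ) (u : U) : φ ((A.D ^ k) u) = (B.D ^ k) (φ u) := by
  induction k generalizing u with
  | zero => rfl
  | succ k ih => rw [Module.End.pow_succ_apply A.D, Module.End.pow_succ_apply B.D, ih, hφ.map_D]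

lemma map_skewDefect (hφ : IsHom A B φ) (n : ℕ) (v w : U) :
    φ (A.skewDefect n v w) = B.skewDefect n (φ v) (φ w) := by
  obtain ⟨N, hN⟩ := A.trunc w v
  rw [skewDefect, skewDefect, map_add, hφ.map_mul, skewTail, skewTail,
    φ.map_finsum_of_eq_zero (K := N) fun k hk => by rw [hN (n + k) (by omega), map_zero, smul_zero]]
  simp only [map_smul, hφ.map_D_pow, hφ.map_mul]

lemma jacobiIdentity (hφ : IsHom A B φ) (hsurj : Function.Surjective φ)
    (hA : A.JacobiIdentity) : B.JacobiIdentity := by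
  intro k m n x y z
  obtain ⟨u, rfl⟩ := hsurj x
  obtain ⟨v, rfl⟩ := hsurj y
  obtain ⟨w, rfl⟩ := hsurj z
  have h := congrArg φ (hA k m n u v w)
  rw [φ.map_finsum_of_eq_zero (K := k + 1) fun i hi => by simp [Nat.choose_eq_zero_of_lt hi],
    φ.map_finsum_of_eq_zero (K := m + 1) fun i hi => by simp [Nat.choose_eq_zero_of_lt hi]] at h
  simpa only [map_smul, map_sub, hφ.map_mul] using h

lemma skewSpan_le_ker {B : VertexLie V} (hφ : IsHom A B.toVLAJSS φ) :
    A.skewSpan ≤ LinearMap.ker φ :=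
  Submodule.span_le.2 fun _ ⟨v, w, n, hx⟩ => by
    rw [SetLike.mem_coe, LinearMap.mem_ker, hx]
    exact (hφ.map_skewDefect n v w).trans (B.skewDefect_eq_zero n _ _)

end IsHom

end VLAJSS

namespace VLASS

variable (A : VLASS U)

lemma commutator_formula (m n : ℕ) (u v w : U) :
    A.mul m u (A.mul n v w) = A.mul n v (A.mul m u w)
      + ∑ i ∈ range (m + 1), (m.choose i : ℂ) • A.mul (m + n - i) (A.mul i u v) w := by
  have h := A.jacobi 0 m n u v w
  rw [finsum_eq_single _ 0 fun i hi => by simp [Nat.choose_eq_zero_of_lt (Nat.pos_of_ne_zero hi)],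
    finsum_eq_sum_range_of_eq_zero (N := m + 1) fun i hi => by
      simp [Nat.choose_eq_zero_of_lt hi]] at h
  simp only [pow_zero, Nat.choose_zero_right, Nat.cast_one, mul_one, one_smul, add_zero,
    Nat.sub_zero, zero_add] at h
  rw [← h]
  abel

lemma associativity_formula (m p : ℕ) (u v w : U) :
    ∑ j ∈ range (m + 1), ((-1) ^ j * (m.choose j : ℂ)) • A.mul (m - j) u (A.mul (p + j) w v)
      = A.mul p (A.mul m u w) v + (-1 : ℂ) ^ m •
        ∑ j ∈ range (m + 1), ((-1) ^ j * (m.choose j : ℂ)) • A.mul (p + m - j) w (A.mul j u v) := by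
  have h := A.jacobi m 0 p u w v
  rw [finsum_eq_sum_range_of_eq_zero (N := m + 1) fun i hi => by
      simp [Nat.choose_eq_zero_of_lt hi],
    finsum_eq_single _ 0 fun i hi => by
      simp [Nat.choose_eq_zero_of_lt (Nat.pos_of_ne_zero hi)]] at h
  simp only [zero_add, Nat.choose_zero_right, Nat.cast_one, one_smul, Nat.sub_zero, add_zero,
    smul_sub, sum_sub_distrib] at h
  rw [eq_add_of_sub_eq h, smul_sum]
  exact congrArg _ (sum_congr rfl fun j _ => smul_comm _ _ _)

lemma mul_skewTail (m n : ℕ) (u v w : U) :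
    A.mul m u (A.skewTail n v w) = A.skewTail n v (A.mul m u w)
      + ∑ i ∈ range (m + 1), (m.choose i : ℂ) • A.skewTail (m + n - i) (A.mul i u v) w := by
  obtain ⟨N, hN⟩ := ((A.eventually_mul_eq_zero w v).and
    ((A.eventually_mul_eq_zero (A.mul m u w) v).and ((eventually_all_finset (range (m + 1))).2
      fun i _ => A.eventually_mul_eq_zero w (A.mul i u v)))).exists_forall_of_atTop
  rw [A.mul_skewTail_eq_sum m n u v w fun j hj => (hN j hj).1,
    A.skewTail_eq_sum_range n v _ fun j hj => (hN j hj).2.1]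
  simp only [A.associativity_formula, map_add, smul_add, sum_add_distrib, add_right_inj,
    map_smul, map_sum, smul_sum, smul_smul]
  rw [sum_comm]
  refine sum_congr rfl fun i hi => ?_
  rw [A.skewTail_eq_sum_range _ _ _ fun j hj => (hN j hj).2.2 i hi, smul_sum]
  refine sum_congr rfl fun l _ => ?_
  have him : i ≤ m := Nat.lt_succ_iff.1 (mem_range.1 hi)
  rw [smul_smul, show n + l + m - i = m + n - i + l by omega, ← skewCoeff_mul_neg_one_pow him]
  congr 1
  ring

lemma mul_skewDefect (m n : ℕ) (u v w : U) :
    A.mul m u (A.skewDefect n v w) = A.skewDefect n v (A.mul m u w)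
      + ∑ i ∈ range (m + 1), (m.choose i : ℂ) • A.skewDefect (m + n - i) (A.mul i u v) w := by
  rw [VLAJSS.skewDefect, map_add, commutator_formula, mul_skewTail]
  simp only [VLAJSS.skewDefect, smul_add, sum_add_distrib]
  abel

lemma mul_mem_skewSpan_left (n : ℕ) (u : U) {a : U} (ha : a ∈ A.skewSpan) :
    A.mul n u a ∈ A.skewSpan :=
  A.skewSpan_le_comap (fun n' v w => by
    rw [A.mul_skewDefect]
    exact add_mem (A.skewDefect_mem_skewSpan _ _ _)
      (sum_mem fun i _ => Submodule.smul_mem _ _ (A.skewDefect_mem_skewSpan _ _ _))) ha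

lemma mul_mem_skewSpan_right (n : ℕ) (u : U) {a : U} (ha : a ∈ A.skewSpan) :
    A.mul n a u ∈ A.skewSpan := by
  obtain ⟨N, hN⟩ := A.trunc u a
  rw [← add_sub_cancel_right (A.mul n a u) (A.skewTail n a u), ← VLAJSS.skewDefect,
    A.skewTail_eq_sum_range n a u hN]
  exact sub_mem (A.skewDefect_mem_skewSpan n a u) (sum_mem fun k _ => Submodule.smul_mem _ _
    (A.D_pow_mem_skewSpan k (A.mul_mem_skewSpan_left (n + k) u ha)))

def quotientD : (U ⧸ A.skewSpan) →ₗ[ℂ] U ⧸ A.skewSpan :=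
  A.skewSpan.mapQ A.skewSpan A.D fun _ => A.D_mem_skewSpan

def quotientMul (n : ℕ) : (U ⧸ A.skewSpan) →ₗ[ℂ] (U ⧸ A.skewSpan) →ₗ[ℂ] U ⧸ A.skewSpan :=
  ((A.mul n).compr₂ A.skewSpan.mkQ).liftQ₂ A.skewSpan A.skewSpan
    (fun a ha => LinearMap.ext fun u =>
      show Submodule.Quotient.mk (A.mul n a u) = 0 from
        (Submodule.Quotient.mk_eq_zero _).2 (A.mul_mem_skewSpan_right n u ha))
    (fun a ha => LinearMap.ext fun u =>
      show Submodule.Quotient.mk (A.mul n u a) = 0 from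
        (Submodule.Quotient.mk_eq_zero _).2 (A.mul_mem_skewSpan_left n u ha))

@[simp]
lemma quotientD_mk (u : U) :
    A.quotientD (Submodule.Quotient.mk u) = Submodule.Quotient.mk (A.D u) :=
  rfl

@[simp]
lemma quotientMul_mk (n : ℕ) (u v : U) :
    A.quotientMul n (Submodule.Quotient.mk u) (Submodule.Quotient.mk v)
      = Submodule.Quotient.mk (A.mul n u v) :=
  rfl

def quotientVLAJSS : VLAJSS (U ⧸ A.skewSpan) where
  D := A.quotientD
  mul := A.quotientMul
  trunc x y := by
    induction x using Submodule.Quotient.induction_on with | _ u => ?_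
    induction y using Submodule.Quotient.induction_on with | _ v => ?_
    obtain ⟨N, hN⟩ := A.trunc u v
    exact ⟨N, fun n hn => by simp [hN n hn]⟩
  dLeft n x y := by
    induction x using Submodule.Quotient.induction_on
    induction y using Submodule.Quotient.induction_on
    simp [A.dLeft]
  dLeftZero x y := by
    induction x using Submodule.Quotient.induction_on
    induction y using Submodule.Quotient.induction_on
    simp [A.dLeftZero]
  leibniz n x y := by
    induction x using Submodule.Quotient.induction_on
    induction y using Submodule.Quotient.induction_on
    simp [A.leibniz]

lemma isHom_mkQ : A.IsHom A.quotientVLAJSS A.skewSpan.mkQ :=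
  ⟨fun _ _ _ => rfl, fun _ => rfl⟩

def quotient : VertexLie (U ⧸ A.skewSpan) :=
  { A.quotientVLAJSS with
    skew := fun n x y => by
      induction x using Submodule.Quotient.induction_on with | _ u => ?_
      induction y using Submodule.Quotient.induction_on with | _ v => ?_
      refine eq_neg_of_add_eq_zero_left ?_
      exact (A.isHom_mkQ.map_skewDefect n u v).symm.trans
        ((Submodule.Quotient.mk_eq_zero _).2 (A.skewDefect_mem_skewSpan n u v))
    jacobi := A.isHom_mkQ.jacobiIdentity A.skewSpan.mkQ_surjective A.jacobi }

lemma isHom_liftQ {V : Type*} [AddCommGroup V] [Module ℂ V] {B : VLAJSS V} {φ : U →ₗ[ℂ] V}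
    (hφ : A.IsHom B φ) (hker : A.skewSpan ≤ LinearMap.ker φ) :
    A.quotientVLAJSS.IsHom B (A.skewSpan.liftQ φ hker) where
  map_mul n x y := by
    induction x using Submodule.Quotient.induction_on with | _ u => ?_
    induction y using Submodule.Quotient.induction_on with | _ v => ?_
    exact hφ.map_mul n u v
  map_D x := by
    induction x using Submodule.Quotient.induction_on with | _ u => ?_
    exact hφ.map_D u

end VLASS

/-- for a VLA-SS `W`, the span `W₁` of the skew defect vectors is a
two-sided `D`-invariant ideal; the quotient `W_ss = W/W₁`, with the induced `D` and
products, is a vertex Lie algebra; and every homomorphism from `W` to a vertex Lie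
algebra vanishes on `W₁`, hence factors through `W_ss`. -/
theorem stmt12 (A : VLASS U) :
    (∀ a ∈ Submodule.span ℂ (SkewDefects A.toVLAJSS),
      A.D a ∈ Submodule.span ℂ (SkewDefects A.toVLAJSS)) ∧
    (∀ (n : ℕ) (u : U), ∀ a ∈ Submodule.span ℂ (SkewDefects A.toVLAJSS),
      A.mul n u a ∈ Submodule.span ℂ (SkewDefects A.toVLAJSS) ∧
      A.mul n a u ∈ Submodule.span ℂ (SkewDefects A.toVLAJSS)) ∧
    (∀ W₁ : Submodule ℂ U, W₁ = Submodule.span ℂ (SkewDefects A.toVLAJSS) →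
      ∃ (DQ : (U ⧸ W₁) →ₗ[ℂ] (U ⧸ W₁))
        (mulQ : ℕ → (U ⧸ W₁) →ₗ[ℂ] (U ⧸ W₁) →ₗ[ℂ] (U ⧸ W₁)),
        (∀ u : U, DQ (W₁.mkQ u) = W₁.mkQ (A.D u)) ∧
        (∀ (n : ℕ) (u v : U), mulQ n (W₁.mkQ u) (W₁.mkQ v) = W₁.mkQ (A.mul n u v)) ∧
        -- the quotient is a vertex Lie algebra:
        (∀ x y : U ⧸ W₁, ∃ N : ℕ, ∀ n : ℕ, N ≤ n → mulQ n x y = 0) ∧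
        (∀ (n : ℕ) (x y : U ⧸ W₁), mulQ (n + 1) (DQ x) y = (-((n : ℂ) + 1)) • mulQ n x y) ∧
        (∀ x y : U ⧸ W₁, mulQ 0 (DQ x) y = 0) ∧
        (∀ (n : ℕ) (x y : U ⧸ W₁), DQ (mulQ n x y) = mulQ n (DQ x) y + mulQ n x (DQ y)) ∧
        (∀ (n : ℕ) (x y : U ⧸ W₁),
          mulQ n x y =
            -∑ᶠ k : ℕ, (((-1 : ℂ) ^ (n + k)) / (Nat.factorial k : ℂ)) •
              ((DQ ^ k) (mulQ (n + k) y x))) ∧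
        (∀ (k m n : ℕ) (x y z : U ⧸ W₁),
          ∑ᶠ i : ℕ, ((-1 : ℂ) ^ i * (Nat.choose k i : ℂ)) •
              (mulQ (m + k - i) x (mulQ (n + i) y z)
                - ((-1 : ℂ) ^ k) • mulQ (n + k - i) y (mulQ (m + i) x z))
            = ∑ᶠ i : ℕ, ((Nat.choose m i : ℂ)) • mulQ (m + n - i) (mulQ (k + i) x y) z) ∧
        -- universal property:
        (∀ (V : Type*) (_ : AddCommGroup V), ∀ (_ : Module ℂ V) (B : VertexLie V)
            (φ : U →ₗ[ℂ] V),
          (∀ (n : ℕ) (u v : U), φ (A.mul n u v) = B.mul n (φ u) (φ v)) →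
          (∀ u : U, φ (A.D u) = B.D (φ u)) →
          (∀ a ∈ W₁, φ a = 0) ∧
          ∃ ψ : (U ⧸ W₁) →ₗ[ℂ] V,
            (∀ u : U, ψ (W₁.mkQ u) = φ u) ∧
            (∀ (n : ℕ) (x y : U ⧸ W₁), ψ (mulQ n x y) = B.mul n (ψ x) (ψ y)) ∧
            (∀ x : U ⧸ W₁, ψ (DQ x) = B.D (ψ x)))) := by
  refine ⟨fun a => A.D_mem_skewSpan, fun n u a ha =>
    ⟨A.mul_mem_skewSpan_left n u ha, A.mul_mem_skewSpan_right n u ha⟩, ?_⟩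
  rintro W₁ rfl
  let Q := A.quotient
  refine ⟨Q.D, Q.mul, A.isHom_mkQ.map_D, fun n u v => (A.isHom_mkQ.map_mul n u v).symm,
    Q.trunc, Q.dLeft, Q.dLeftZero, Q.leibniz, Q.skew, Q.jacobi, ?_⟩
  intro V _ _ B φ hmul hD
  have hφ : A.IsHom B.toVLAJSS φ := ⟨hmul, hD⟩
  have hker := hφ.skewSpan_le_ker
  exact ⟨fun a ha => hker ha, _, fun _ => rfl, (A.isHom_liftQ hφ hker).map_mul,
    (A.isHom_liftQ hφ hker).map_D⟩

end
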